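/- Let O ⊂ ℝ³ be a bounded smooth domain, c* ∈ ℝ, let Q : O → S₀³ (symmetric traceless 3×3 matrices) be sufficiently smooth with ∇Q·n = 0 on ∂O, and let u be a sufficiently smooth vector field on O with u = 0 on ∂O. Then the following cancellation identity holds: −∫_O (∇·(∇Q⊙∇Q))·u dx + ∫_O u^i ∂_i Q^{kl} ΔQ^{kl} dx − ∫_O u^i ∂_i Q^{kl} (Q^{kl} + c* Q^{kl} |Q|²) dx = ∫_O (½|∇Q|² + ½|Q|² + (c*/4)(tr(Q²))²) div u dx, i.e. these four terms sum to zero when the right-hand side is moved to the left. Moreover, for any symmetric 3×3 matrix Q and any skew-symmetric 3×3 matrix Ω, the pointwise trace identity tr((ΩQ − QΩ)(Q + c* Q tr(Q²))) = 0 holds. -/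

import Mathlib

/- Common infrastructure for the formalization of
   "Global Existence and Regularity of Solutions for Active Liquid Crystals"
   (compressible active liquid crystal system in the Beris–Edwards framework). -/

noncomputable section

open MeasureTheory Real Set Filter
open scoped BigOperators Topology

/-- points of ℝ³ -/
abbrev V3 : Type := Fin 3 → ℝ
/-- 3×3 real matrices (values of the Q-tensor) -/
abbrev M3 : Type := Matrix (Fin 3) (Fin 3) ℝ

namespace ALC

/-- partial derivative ∂ᵢ f(x) -/
def pd (f : V3 → ℝ) (i : Fin 3) (x : V3) : ℝ := fderiv ℝ f x (Pi.single i 1)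

/-- spatial gradient -/
def gradv (f : V3 → ℝ) (x : V3) : V3 := fun i => pd f i x

/-- euclidean dot product -/
def vdot (u v : V3) : ℝ := ∑ i, u i * v i

/-- squared euclidean norm -/
def vnormSq (u : V3) : ℝ := ∑ i, (u i) ^ 2

/-- divergence of a vector field -/
def divv (u : V3 → V3) (x : V3) : ℝ := ∑ i, pd (fun y => u y i) i x

/-- Laplacian of a scalar field -/
def lap (f : V3 → ℝ) (x : V3) : ℝ := ∑ i, pd (fun y => pd f i y) i x

/-- componentwise Laplacian ΔQ of a matrix field -/
def lapM (Q : V3 → M3) (x : V3) : M3 := Matrix.of fun i j => lap (fun y => Q y i j) x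

/-- divergence of a matrix field, (∇·S)_i = ∂_j S_{ij} -/
def mdivg (S : V3 → M3) (x : V3) : V3 := fun i => ∑ j, pd (fun y => S y i j) j x

/-- squared Frobenius norm |A|² (equals tr(A²) for symmetric A) -/
def mnormSq (A : M3) : ℝ := ∑ i, ∑ j, (A i j) ^ 2

/-- Frobenius inner product A : B -/
def mdot (A B : M3) : ℝ := ∑ i, ∑ j, A i j * B i j

/-- the space S₀³ of symmetric traceless matrices -/
def Sym0 (A : M3) : Prop := A.IsSymm ∧ A.trace = 0

/-- |∇Q|² = ∂_k Q^{ij} ∂_k Q^{ij} -/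
def mGradSq (Q : V3 → M3) (x : V3) : ℝ := ∑ k, ∑ i, ∑ j, (pd (fun y => Q y i j) k x) ^ 2

/-- |∇u|² = ∂_j u_i ∂_j u_i -/
def uGradSq (u : V3 → V3) (x : V3) : ℝ := ∑ i, ∑ j, (pd (fun y => u y i) j x) ^ 2

/-- |∇f|² for scalar f -/
def gradSq (f : V3 → ℝ) (x : V3) : ℝ := vnormSq (gradv f x)

/-- (∇Q ⊙ ∇Q)_{ij} = ∂_i Q^{kl} ∂_j Q^{kl} -/
def odot (Q : V3 → M3) (x : V3) : M3 :=
  Matrix.of fun i j => ∑ k, ∑ l, pd (fun y => Q y k l) i x * pd (fun y => Q y k l) j x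

/-- vorticity Ω = (∇u − (∇u)ᵀ)/2 with (∇u)_{αβ} = ∂_β u_α -/
def Omat (u : V3 → V3) (x : V3) : M3 :=
  Matrix.of fun i j => (pd (fun y => u y i) j x - pd (fun y => u y j) i x) / 2

/-- lower-order part of the molecular field:
    G = −((c−c*)/2)Q + b(Q² − (tr Q²/3)I₃) − c* Q tr(Q²) -/
def Gfield (cs b : ℝ) (c : ℝ) (A : M3) : M3 :=
  (-(c - cs) / 2) • A + b • (A * A - ((A * A).trace / 3) • (1 : M3))
    - (cs * (A * A).trace) • A

/-- molecular field H[Q,c] = ΔQ + G(c,Q) -/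
def Hfield (cs b : ℝ) (c : ℝ) (Q : V3 → M3) (x : V3) : M3 :=
  lapM Q x + Gfield cs b c (Q x)

/-- F(Q) = ½|∇Q|² + ½ tr(Q²) + (c*/4) (tr Q²)² -/
def Ffun (cs : ℝ) (Q : V3 → M3) (x : V3) : ℝ :=
  mGradSq Q x / 2 + (Q x * Q x).trace / 2 + cs / 4 * ((Q x * Q x).trace) ^ 2

/-- total stress S = F(Q)I₃ − ∇Q⊙∇Q + (QΔQ − ΔQ Q) + σ* c² Q -/
def stressF (cs ss : ℝ) (c : V3 → ℝ) (Q : V3 → M3) (x : V3) : M3 :=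
  Ffun cs Q x • (1 : M3) - odot Q x + (Q x * lapM Q x - lapM Q x * Q x)
    + (ss * (c x) ^ 2) • Q x

/-! ### smoothness of time-dependent fields -/

def SmoothR (f : ℝ → V3 → ℝ) : Prop := ContDiff ℝ (⊤ : ℕ∞) (Function.uncurry f)
def SmoothV (u : ℝ → V3 → V3) : Prop := ∀ i, ContDiff ℝ (⊤ : ℕ∞) (fun p : ℝ × V3 => u p.1 p.2 i)
def SmoothM (Q : ℝ → V3 → M3) : Prop := ∀ i j, ContDiff ℝ (⊤ : ℕ∞) (fun p : ℝ × V3 => Q p.1 p.2 i j)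

/-! ### pointwise (classical) form of the equations -/

/-- ∂_t c + (u·∇)c = D₀ Δc on (0,T)×O -/
def PtConc (D0 T : ℝ) (O : Set V3) (c : ℝ → V3 → ℝ) (u : ℝ → V3 → V3) : Prop :=
  ∀ t ∈ Set.Ioo (0:ℝ) T, ∀ x ∈ O,
    deriv (fun s => c s x) t + vdot (u t x) (gradv (c t) x) = D0 * lap (c t) x

/-- ∂_t ρ + div(ρu) = ε Δρ on (0,T)×O -/
def PtMass (ε T : ℝ) (O : Set V3) (ρ : ℝ → V3 → ℝ) (u : ℝ → V3 → V3) : Prop :=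
  ∀ t ∈ Set.Ioo (0:ℝ) T, ∀ x ∈ O,
    deriv (fun s => ρ s x) t + (∑ i, pd (fun y => ρ t y * u t y i) i x) = ε * lap (ρ t) x

/-- momentum equation (with artificial pressure δρ^β and viscosity term ε(∇ρ·∇)u) -/
def PtMom (μ ν ss cs γ δ β ε T : ℝ) (O : Set V3)
    (c ρ : ℝ → V3 → ℝ) (u : ℝ → V3 → V3) (Q : ℝ → V3 → M3) : Prop :=
  ∀ t ∈ Set.Ioo (0:ℝ) T, ∀ x ∈ O, ∀ i : Fin 3,
    deriv (fun s => ρ s x * u s x i) t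
      + (∑ j, pd (fun y => ρ t y * u t y i * u t y j) j x)
      + pd (fun y => ρ t y ^ γ + δ * ρ t y ^ β) i x
      + ε * vdot (gradv (ρ t) x) (gradv (fun y => u t y i) x)
    = μ * lap (fun y => u t y i) x + (ν + μ) * pd (fun y => divv (u t) y) i x
      + mdivg (stressF cs ss (c t) (Q t)) x i

/-- ∂_t Q + (u·∇)Q + QΩ − ΩQ = Γ H[Q,c] on (0,T)×O -/
def PtQ (Γ cs b T : ℝ) (O : Set V3)
    (c : ℝ → V3 → ℝ) (u : ℝ → V3 → V3) (Q : ℝ → V3 → M3) : Prop :=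
  ∀ t ∈ Set.Ioo (0:ℝ) T, ∀ x ∈ O, ∀ i j : Fin 3,
    deriv (fun s => Q s x i j) t + vdot (u t x) (gradv (fun y => Q t y i j) x)
      + (Q t x * Omat (u t) x - Omat (u t) x * Q t x) i j
    = Γ * Hfield cs b (c t x) (Q t) x i j

/-! ### boundary conditions -/

def NeumannBC (O : Set V3) (nrm : V3 → V3) (T : ℝ) (f : ℝ → V3 → ℝ) : Prop :=
  ∀ t ∈ Set.Icc (0:ℝ) T, ∀ x ∈ frontier O, vdot (gradv (f t) x) (nrm x) = 0

def DirichletBC (O : Set V3) (T : ℝ) (u : ℝ → V3 → V3) : Prop :=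
  ∀ t ∈ Set.Icc (0:ℝ) T, ∀ x ∈ frontier O, ∀ i, u t x i = 0

def NeumannBCM (O : Set V3) (nrm : V3 → V3) (T : ℝ) (Q : ℝ → V3 → M3) : Prop :=
  ∀ t ∈ Set.Icc (0:ℝ) T, ∀ x ∈ frontier O, ∀ i j,
    vdot (gradv (fun y => Q t y i j) x) (nrm x) = 0

/-! ### test functions -/

/-- test function up to the initial time and up to the (spatial) boundary:
    smooth, compactly supported, vanishing for t ≥ T.  Used for the weak
    formulation of Neumann problems with initial data. -/
def TestIC (T : ℝ) (φ : ℝ × V3 → ℝ) : Prop :=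
  ContDiff ℝ (⊤ : ℕ∞) φ ∧ HasCompactSupport φ ∧ ∀ t x, T ≤ t → φ (t, x) = 0

/-- vector test function for the momentum equation: additionally vanishes
    outside O (no-slip boundary condition). -/
def TestICv (T : ℝ) (O : Set V3) (φ : ℝ × V3 → V3) : Prop :=
  ContDiff ℝ (⊤ : ℕ∞) φ ∧ HasCompactSupport φ ∧ (∀ t x, T ≤ t → φ (t, x) = 0)
    ∧ ∀ t x, x ∉ O → φ (t, x) = 0

/-- test function compactly supported inside (0,T)×O (distributions on O_T) -/
def TestD (T : ℝ) (O : Set V3) (φ : ℝ × V3 → ℝ) : Prop :=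
  ContDiff ℝ (⊤ : ℕ∞) φ ∧ HasCompactSupport φ ∧ tsupport φ ⊆ Set.Ioo 0 T ×ˢ O

/-- spatial test function -/
def TestS (φ : V3 → ℝ) : Prop := ContDiff ℝ (⊤ : ℕ∞) φ ∧ HasCompactSupport φ

/-- spatial test function supported in O -/
def TestSO (O : Set V3) (φ : V3 → ℝ) : Prop := TestS φ ∧ tsupport φ ⊆ O

/-- temporal test function supported in (0,T) -/
def TestTime (T : ℝ) (ψ : ℝ → ℝ) : Prop :=
  ContDiff ℝ (⊤ : ℕ∞) ψ ∧ HasCompactSupport ψ ∧ tsupport ψ ⊆ Set.Ioo 0 T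

/-! ### weak formulations (with initial data; the homogeneous Neumann
    conditions are encoded by allowing test functions that do not vanish
    on ∂O, the no-slip condition by test functions vanishing outside O) -/

/-- weak formulation of ∂_t c + (u·∇)c = D₀Δc, ∇c·n|_∂O = 0, c|_{t=0} = c₀ -/
def WeakConc (D0 T : ℝ) (O : Set V3) (c0 : V3 → ℝ)
    (c : ℝ → V3 → ℝ) (u : ℝ → V3 → V3) : Prop :=
  ∀ φ : ℝ × V3 → ℝ, TestIC T φ →
    ∫ t in Set.Ioo (0:ℝ) T, ∫ x in O,
      (- c t x * deriv (fun s => φ (s, x)) t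
        + vdot (u t x) (gradv (c t) x) * φ (t, x)
        + D0 * vdot (gradv (c t) x) (gradv (fun y => φ (t, y)) x))
    = ∫ x in O, c0 x * φ (0, x)

/-- weak formulation of ∂_t ρ + div(ρu) = εΔρ, ∇ρ·n|_∂O = 0, ρ|_{t=0} = ρ₀ -/
def WeakMass (ε T : ℝ) (O : Set V3) (ρ0 : V3 → ℝ)
    (ρ : ℝ → V3 → ℝ) (u : ℝ → V3 → V3) : Prop :=
  ∀ φ : ℝ × V3 → ℝ, TestIC T φ →
    (∫ t in Set.Ioo (0:ℝ) T, ∫ x in O,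
      (ρ t x * deriv (fun s => φ (s, x)) t
        + ρ t x * vdot (u t x) (gradv (fun y => φ (t, y)) x)
        - ε * vdot (gradv (ρ t) x) (gradv (fun y => φ (t, y)) x)))
    + (∫ x in O, ρ0 x * φ (0, x)) = 0

/-- weak formulation of the continuity equation in D'(O_T) (no initial term) -/
def WeakMassD (T : ℝ) (O : Set V3) (ρ : ℝ → V3 → ℝ) (u : ℝ → V3 → V3) : Prop :=
  ∀ φ : ℝ × V3 → ℝ, TestD T O φ →
    ∫ t in Set.Ioo (0:ℝ) T, ∫ x in O,
      (ρ t x * deriv (fun s => φ (s, x)) t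
        + ρ t x * vdot (u t x) (gradv (fun y => φ (t, y)) x)) = 0

/-- weak formulation of the momentum equation with pressure ρ^γ + δρ^β and
    artificial viscosity term ε(∇ρ·∇)u, no-slip boundary data, momentum m₀
    at t = 0. -/
def WeakMom (μ ν ss cs γ δ β ε T : ℝ) (O : Set V3) (m0 : V3 → V3)
    (c ρ : ℝ → V3 → ℝ) (u : ℝ → V3 → V3) (Q : ℝ → V3 → M3) : Prop :=
  ∀ φ : ℝ × V3 → V3, TestICv T O φ →
    (∫ t in Set.Ioo (0:ℝ) T, ∫ x in O,
      ((∑ i, ρ t x * u t x i * deriv (fun s => φ (s, x) i) t)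
        + (∑ i, ∑ j, ρ t x * u t x i * u t x j * pd (fun y => φ (t, y) i) j x)
        + (ρ t x ^ γ + δ * ρ t x ^ β) * (∑ i, pd (fun y => φ (t, y) i) i x)
        - ε * ∑ i, vdot (gradv (ρ t) x) (gradv (fun y => u t y i) x) * φ (t, x) i))
    + (∫ x in O, vdot (m0 x) (φ (0, x)))
    = ∫ t in Set.Ioo (0:ℝ) T, ∫ x in O,
        (μ * (∑ i, ∑ j, pd (fun y => u t y i) j x * pd (fun y => φ (t, y) i) j x)
          + (ν + μ) * divv (u t) x * (∑ i, pd (fun y => φ (t, y) i) i x)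
          + ∑ i, ∑ j, stressF cs ss (c t) (Q t) x i j * pd (fun y => φ (t, y) i) j x)

/-- weak formulation of the Q-tensor equation with Neumann boundary data
    and initial value Q₀ (componentwise). -/
def WeakQ (Γ cs b T : ℝ) (O : Set V3) (Q0 : V3 → M3)
    (c : ℝ → V3 → ℝ) (u : ℝ → V3 → V3) (Q : ℝ → V3 → M3) : Prop :=
  ∀ φ : ℝ × V3 → ℝ, TestIC T φ → ∀ i j : Fin 3,
    ∫ t in Set.Ioo (0:ℝ) T, ∫ x in O,
      (- Q t x i j * deriv (fun s => φ (s, x)) t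
        + (vdot (u t x) (gradv (fun y => Q t y i j) x)
            + (Q t x * Omat (u t) x - Omat (u t) x * Q t x) i j) * φ (t, x)
        + Γ * vdot (gradv (fun y => Q t y i j) x) (gradv (fun y => φ (t, y)) x)
        - Γ * Gfield cs b (c t x) (Q t x) i j * φ (t, x))
    = ∫ x in O, Q0 x i j * φ (0, x)

/-- the continuity equation holds in the renormalized sense in D'((0,T)×ℝ³) -/
def Renormalized (T : ℝ) (ρ : ℝ → V3 → ℝ) (u : ℝ → V3 → V3) : Prop :=
  ∀ g : ℝ → ℝ, ContDiff ℝ 1 g → (∃ M : ℝ, ∀ z, M ≤ z → deriv g z = 0) →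
    ∀ φ : ℝ × V3 → ℝ, ContDiff ℝ (⊤ : ℕ∞) φ → HasCompactSupport φ →
      tsupport φ ⊆ Set.Ioo 0 T ×ˢ (Set.univ : Set V3) →
      ∫ t in Set.Ioo (0:ℝ) T, ∫ x : V3,
        (g (ρ t x) * deriv (fun s => φ (s, x)) t
          + g (ρ t x) * vdot (u t x) (gradv (fun y => φ (t, y)) x)
          - (deriv g (ρ t x) * ρ t x - g (ρ t x)) * divv (u t) x * φ (t, x)) = 0

/-! ### energy, dissipation -/

/-- E(t) = ∫_O (½c² + ½ρ|u|² + ρ^γ/(γ−1) + ½|Q|² + ½|∇Q|² + (c*/4)|Q|⁴) dx -/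
def energyF (γ cs : ℝ) (O : Set V3) (c ρ : ℝ → V3 → ℝ) (u : ℝ → V3 → V3)
    (Q : ℝ → V3 → M3) (t : ℝ) : ℝ :=
  ∫ x in O, ((c t x) ^ 2 / 2 + ρ t x * vnormSq (u t x) / 2 + ρ t x ^ γ / (γ - 1)
    + mnormSq (Q t x) / 2 + mGradSq (Q t) x / 2 + cs / 4 * (mnormSq (Q t x)) ^ 2)

/-- dissipation (D₀/2)‖∇c‖² + (μ/2)‖∇u‖² + (ν+μ)‖div u‖² + (Γ/2)‖ΔQ‖² + (c*²Γ/2)‖Q‖⁶_{L⁶} -/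
def dissipF (D0 μ ν Γ cs : ℝ) (O : Set V3) (c : ℝ → V3 → ℝ) (u : ℝ → V3 → V3)
    (Q : ℝ → V3 → M3) (t : ℝ) : ℝ :=
  D0 / 2 * (∫ x in O, gradSq (c t) x)
    + μ / 2 * (∫ x in O, uGradSq (u t) x)
    + (ν + μ) * (∫ x in O, (divv (u t) x) ^ 2)
    + Γ / 2 * (∫ x in O, mnormSq (lapM (Q t) x))
    + cs ^ 2 * Γ / 2 * (∫ x in O, (mnormSq (Q t x)) ^ 3)

/-- the right-hand side ‖u‖² + ‖∇Q‖² + ‖Q‖² + ‖Q‖⁴_{L⁴} -/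
def lowF (O : Set V3) (u : ℝ → V3 → V3) (Q : ℝ → V3 → M3) (t : ℝ) : ℝ :=
  (∫ x in O, vnormSq (u t x)) + (∫ x in O, mGradSq (Q t) x)
    + (∫ x in O, mnormSq (Q t x)) + (∫ x in O, (mnormSq (Q t x)) ^ 2)

/-- the differential inequality E' + D ≤ R in D'(0,T) -/
def EnergyIneq (T : ℝ) (E D R : ℝ → ℝ) : Prop :=
  ∀ ψ : ℝ → ℝ, TestTime T ψ → (∀ t, 0 ≤ ψ t) →
    ∫ t in Set.Ioo (0:ℝ) T, (- E t * deriv ψ t + D t * ψ t)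
      ≤ ∫ t in Set.Ioo (0:ℝ) T, R t * ψ t

/-! ### the approximate (three-level) system, as one predicate -/

def ApproxSol (D0 μ ν Γ cs b ss γ δ β ε T : ℝ) (O : Set V3)
    (c0 ρ0 : V3 → ℝ) (m0 : V3 → V3) (Q0 : V3 → M3)
    (c ρ : ℝ → V3 → ℝ) (u : ℝ → V3 → V3) (Q : ℝ → V3 → M3) : Prop :=
  WeakConc D0 T O c0 c u ∧ WeakMass ε T O ρ0 ρ u
    ∧ WeakMom μ ν ss cs γ δ β ε T O m0 c ρ u Q ∧ WeakQ Γ cs b T O Q0 c u Q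

/-- the uniform (in the approximation parameters) a priori bounds -/
def UnifBounds (γ δ β T : ℝ) (O : Set V3) (cl cu C : ℝ)
    (c ρ : ℝ → V3 → ℝ) (u : ℝ → V3 → V3) (Q : ℝ → V3 → M3) : Prop :=
  (∀ᵐ p : ℝ × V3 ∂((volume : Measure (ℝ × V3)).restrict (Set.Ioo 0 T ×ˢ O)),
      cl ≤ c p.1 p.2 ∧ c p.1 p.2 ≤ cu ∧ 0 ≤ ρ p.1 p.2 ∧ Sym0 (Q p.1 p.2))
  ∧ (∀ t ∈ Set.Ioo (0:ℝ) T, ∫ x in O, ρ t x ^ γ ≤ C)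
  ∧ (∀ t ∈ Set.Ioo (0:ℝ) T, δ * ∫ x in O, ρ t x ^ β ≤ C)
  ∧ (∀ t ∈ Set.Ioo (0:ℝ) T, ∫ x in O, ρ t x * vnormSq (u t x) ≤ C)
  ∧ (∫ t in Set.Ioo (0:ℝ) T, ∫ x in O, (vnormSq (u t x) + uGradSq (u t) x)) ≤ C
  ∧ (∀ t ∈ Set.Ioo (0:ℝ) T,
      ∫ x in O, (mnormSq (Q t x) + mGradSq (Q t) x + (mnormSq (Q t x)) ^ 2) ≤ C)
  ∧ (∫ t in Set.Ioo (0:ℝ) T,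
      ∫ x in O, (mnormSq (lapM (Q t) x) + (mnormSq (Q t x)) ^ 3)) ≤ C
  ∧ (∫ t in Set.Ioo (0:ℝ) T, ∫ x in O, (mnormSq (Q t x)) ^ (5:ℝ)) ≤ C
  ∧ (∫ t in Set.Ioo (0:ℝ) T, ∫ x in O, (mGradSq (Q t) x) ^ ((5:ℝ)/3)) ≤ C

/-! ### norms used for the fixed-velocity problems -/

/-- ‖div u(s)‖_{L^∞(O)} -/
def supDiv (O : Set V3) (u : ℝ → V3 → V3) (s : ℝ) : ℝ := ⨆ x ∈ O, |divv (u s) x|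

/-- H¹(O)-distance of two scalar fields -/
def H1dist (O : Set V3) (f g : V3 → ℝ) : ℝ :=
  Real.sqrt (∫ x in O, ((f x - g x) ^ 2 + gradSq (fun y => f y - g y) x))

/-- H¹(O)-distance of two vector fields -/
def H1distV (O : Set V3) (f g : V3 → V3) : ℝ :=
  Real.sqrt (∫ x in O,
    (vnormSq (fun i => f x i - g x i) + uGradSq (fun y i => f y i - g y i) x))

/-- pointwise C² density of a vector field (squares of all derivatives up to order 2) -/
def c2densityV (u : V3 → V3) (x : V3) : ℝ :=
  vnormSq (u x) + uGradSq u x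
    + ∑ i, ∑ j, ∑ k, (pd (fun y => pd (fun z => u z i) j y) k x) ^ 2

/-- the C([0,T];C²(O̅)) norm of a time-dependent vector field -/
def C2norm (T : ℝ) (O : Set V3) (u : ℝ → V3 → V3) : ℝ :=
  ⨆ t ∈ Set.Icc (0:ℝ) T, ⨆ x ∈ closure O, Real.sqrt (c2densityV (u t) x)

/-- u ∈ C([0,T]; C²(O̅,ℝ³)) -/
def SmoothU2 (u : ℝ → V3 → V3) : Prop :=
  (∀ i, Continuous (fun p : ℝ × V3 => u p.1 p.2 i)) ∧ ∀ t i, ContDiff ℝ 2 (fun y => u t y i)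

/-- membership in the set N_N ⊆ C([0,T]; C²₀(O̅,ℝ³)) -/
def InNN (T N : ℝ) (O : Set V3) (u : ℝ → V3 → V3) : Prop :=
  SmoothU2 u ∧ (∀ t, ∀ x ∈ frontier O, ∀ i, u t x i = 0) ∧ C2norm T O u ≤ N

/-- classical solution of the viscous continuity equation with Neumann data -/
def IsClassicalMassSol (ε T : ℝ) (O : Set V3) (nrm : V3 → V3) (ρ0 : V3 → ℝ)
    (u : ℝ → V3 → V3) (ρ : ℝ → V3 → ℝ) : Prop :=
  (∀ t ∈ Set.Icc (0:ℝ) T, ContDiff ℝ 3 (ρ t))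
  ∧ (∀ x, ContinuousOn (fun t => ρ t x) (Set.Icc (0:ℝ) T))
  ∧ (∀ t ∈ Set.Ioo (0:ℝ) T, ∀ x ∈ closure O, DifferentiableAt ℝ (fun s => ρ s x) t)
  ∧ PtMass ε T O ρ u
  ∧ (∀ x ∈ closure O, ρ 0 x = ρ0 x)
  ∧ (∀ t ∈ Set.Icc (0:ℝ) T, ∀ x ∈ frontier O, vdot (gradv (ρ t) x) (nrm x) = 0)

/-- solution of the fixed-velocity concentration/Q-tensor problem in
    L^∞(0,T;H¹) ∩ L²(0,T;H²), in the weak (Neumann) formulation with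
    initial data. -/
def CQsol (D0 Γ cs b T : ℝ) (O : Set V3)
    (c0 : V3 → ℝ) (Q0 : V3 → M3) (u : ℝ → V3 → V3)
    (c : ℝ → V3 → ℝ) (Q : ℝ → V3 → M3) : Prop :=
  (∃ C : ℝ, ∀ t ∈ Set.Ioo (0:ℝ) T, ∫ x in O, ((c t x) ^ 2 + gradSq (c t) x) ≤ C)
  ∧ IntegrableOn (fun t => ∫ x in O,
      ((c t x) ^ 2 + gradSq (c t) x + (lap (c t) x) ^ 2)) (Set.Ioo 0 T)
  ∧ (∃ C : ℝ, ∀ t ∈ Set.Ioo (0:ℝ) T, ∫ x in O, (mnormSq (Q t x) + mGradSq (Q t) x) ≤ C)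
  ∧ IntegrableOn (fun t => ∫ x in O,
      (mnormSq (Q t x) + mGradSq (Q t) x + mnormSq (lapM (Q t) x))) (Set.Ioo 0 T)
  ∧ WeakConc D0 T O c0 c u
  ∧ WeakQ Γ cs b T O Q0 c u Q


lemma pd_contDiff {f : V3 → ℝ} (hf : ContDiff ℝ (⊤ : ℕ∞) f) (i : Fin 3) :
    ContDiff ℝ (⊤ : ℕ∞) (pd f i) := by
  have h1 : ContDiff ℝ (⊤ : ℕ∞) (fderiv ℝ f) := hf.fderiv_right (by simp)
  exact h1.clm_apply contDiff_const

lemma pd_continuous {f : V3 → ℝ} (hf : ContDiff ℝ (⊤ : ℕ∞) f) (i : Fin 3) :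
    Continuous (pd f i) := (pd_contDiff hf i).continuous

lemma pd_add {x : V3} {f g : V3 → ℝ} (hf : DifferentiableAt ℝ f x) (hg : DifferentiableAt ℝ g x)
    (i : Fin 3) : pd (fun y => f y + g y) i x = pd f i x + pd g i x := by
  simp [pd, fderiv_fun_add hf hg]

lemma pd_mul {x : V3} {f g : V3 → ℝ} (hf : DifferentiableAt ℝ f x)
    (hg : DifferentiableAt ℝ g x) (i : Fin 3) :
    pd (fun y => f y * g y) i x = pd f i x * g x + f x * pd g i x := by
  simp [pd, fderiv_fun_mul hf hg]; ring

lemma pd_sum {ι : Type*} {s : Finset ι} {f : ι → V3 → ℝ} {x : V3}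
    (hf : ∀ k ∈ s, DifferentiableAt ℝ (f k) x) (i : Fin 3) :
    pd (fun y => ∑ k ∈ s, f k y) i x = ∑ k ∈ s, pd (f k) i x := by
  simp [pd, fderiv_fun_sum hf]

lemma pd_const_mul {x : V3} {f : V3 → ℝ} (hf : DifferentiableAt ℝ f x) (c : ℝ) (i : Fin 3) :
    pd (fun y => c * f y) i x = c * pd f i x := by
  simp [pd, fderiv_const_mul hf]

lemma pd_div_const {x : V3} {f : V3 → ℝ} (hf : DifferentiableAt ℝ f x) (c : ℝ) (i : Fin 3) :
    pd (fun y => f y / c) i x = pd f i x / c := by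
  simp only [pd, div_eq_mul_inv]
  rw [fderiv_mul_const hf]
  simp [mul_comm]

lemma pd_sq {x : V3} {f : V3 → ℝ} (hf : DifferentiableAt ℝ f x) (i : Fin 3) :
    pd (fun y => f y ^ 2) i x = 2 * f x * pd f i x := by
  have := pd_mul (x := x) hf hf i
  rw [show (fun y => f y ^ 2) = fun y => f y * f y by funext y; ring]
  rw [this]; ring

lemma pd_comm {x : V3} {f : V3 → ℝ} (hf : ContDiff ℝ (⊤ : ℕ∞) f) (i j : Fin 3) :
    pd (fun y => pd f i y) j x = pd (fun y => pd f j y) i x := by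
  have hdf : ∀ y, HasFDerivAt f (fderiv ℝ f y) y :=
    fun y => (hf.differentiable (by simp) y).hasFDerivAt
  have h2 : ContDiff ℝ (⊤ : ℕ∞) (fderiv ℝ f) := hf.fderiv_right (by simp)
  have hx2 : HasFDerivAt (fderiv ℝ f) (fderiv ℝ (fderiv ℝ f) x) x :=
    (h2.differentiable (by simp) x).hasFDerivAt
  have hsymm := second_derivative_symmetric hdf hx2 (Pi.single i 1) (Pi.single j 1)
  have key : ∀ a b : Fin 3, pd (fun y => pd f a y) b x
      = fderiv ℝ (fderiv ℝ f) x (Pi.single b 1) (Pi.single a 1) := by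
    intro a b
    have : (fun y => pd f a y) = fun y => (fderiv ℝ f y) (Pi.single a 1) := rfl
    rw [pd, this, fderiv_clm_apply (h2.differentiable (by simp) x) (differentiableAt_const _)]
    simp
  rw [key i j, key j i, hsymm]


/-- A nonempty connected component of a bounded open subset of ℝ is an open interval
whose endpoints lie in the frontier. -/
lemma comp_structure {U : Set ℝ} (hU : IsOpen U) (hb : Bornology.IsBounded U)
    {x : ℝ} (hx : x ∈ U) :
    ∃ a b : ℝ, a < b ∧ connectedComponentIn U x = Ioo a b
      ∧ a ∈ frontier U ∧ b ∈ frontier U := by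
  set C := connectedComponentIn U x with hCdef
  have hCU : C ⊆ U := connectedComponentIn_subset U x
  have hCo : IsOpen C := hU.connectedComponentIn
  have hCc : IsPreconnected C := isPreconnected_connectedComponentIn
  have hCne : C.Nonempty := ⟨x, mem_connectedComponentIn hx⟩
  have hCb : Bornology.IsBounded C := hb.subset hCU
  have hbdd : BddBelow C ∧ BddAbove C := ⟨hCb.bddBelow, hCb.bddAbove⟩
  set a := sInf C
  set b := sSup C
  have hord : OrdConnected C := hCc.ordConnected
  have hsub : C ⊆ Ioo a b := by
    intro y hy
    obtain ⟨ε, hε, hball⟩ := Metric.isOpen_iff.1 hCo y hy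
    have h1 : y - ε / 2 ∈ C := by
      apply hball; rw [Metric.mem_ball, Real.dist_eq]
      rw [show y - ε / 2 - y = -(ε/2) by ring, abs_neg, abs_of_nonneg (by linarith)]; linarith
    have h2 : y + ε / 2 ∈ C := by
      apply hball; rw [Metric.mem_ball, Real.dist_eq]
      rw [show y + ε / 2 - y = ε/2 by ring, abs_of_nonneg (by linarith)]; linarith
    constructor
    · exact lt_of_le_of_lt (csInf_le hbdd.1 h1) (by linarith)
    · exact lt_of_lt_of_le (by linarith) (le_csSup hbdd.2 h2)
  have hsup : Ioo a b ⊆ C := by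
    intro y hy
    obtain ⟨p, hp, hpy⟩ := exists_lt_of_csInf_lt hCne hy.1
    obtain ⟨q, hq, hyq⟩ := exists_lt_of_lt_csSup hCne hy.2
    exact hord.out hp hq ⟨hpy.le, hyq.le⟩
  have hCeq : C = Ioo a b := Subset.antisymm hsub hsup
  have hab : a < b := by
    have := hsub (hCne.choose_spec)
    exact lt_trans this.1 this.2
  refine ⟨a, b, hab, hCeq, ?_, ?_⟩
  · constructor
    · exact closure_mono hCU (csInf_mem_closure hCne hbdd.1)
    · rw [hU.interior_eq]
      intro haU
      obtain ⟨ε, hε, hball⟩ := Metric.isOpen_iff.1 hU a haU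
      have hIball : Ioo (a - ε) (a + ε) ⊆ U := by
        rw [← Real.ball_eq_Ioo]; exact hball
      set m := min (a + ε) b with hm
      have ham : a < m := lt_min (by linarith) hab
      set y := (a + m) / 2 with hy
      have hy1 : y ∈ Ioo (a - ε) (a + ε) := by
        constructor
        · have : a < y := by rw [hy]; linarith
          linarith
        · have : m ≤ a + ε := min_le_left _ _
          rw [hy]; linarith
      have hy2 : y ∈ C := by
        rw [hCeq]
        have hm2 : m ≤ b := min_le_right _ _
        exact ⟨by rw [hy]; linarith, by rw [hy]; linarith⟩
      have hVpre : IsPreconnected (Ioo (a - ε) (a + ε) ∪ C) :=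
        IsPreconnected.union y hy1 hy2 isPreconnected_Ioo hCc
      have hVsub : Ioo (a - ε) (a + ε) ∪ C ⊆ U := union_subset hIball hCU
      have hxV : x ∈ Ioo (a - ε) (a + ε) ∪ C := Or.inr (mem_connectedComponentIn hx)
      have := hVpre.subset_connectedComponentIn hxV hVsub
      have haC : a ∈ C := this (Or.inl ⟨by linarith, by linarith⟩)
      rw [hCeq] at haC
      exact lt_irrefl a haC.1
  · constructor
    · exact closure_mono hCU (csSup_mem_closure hCne hbdd.2)
    · rw [hU.interior_eq]
      intro hbU
      obtain ⟨ε, hε, hball⟩ := Metric.isOpen_iff.1 hU b hbU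
      have hIball : Ioo (b - ε) (b + ε) ⊆ U := by
        rw [← Real.ball_eq_Ioo]; exact hball
      set m := max (b - ε) a with hm
      have hmb : m < b := max_lt (by linarith) hab
      set y := (m + b) / 2 with hy
      have hy1 : y ∈ Ioo (b - ε) (b + ε) := by
        have : b - ε ≤ m := le_max_left _ _
        constructor <;> [skip; skip] <;> (rw [hy]; linarith)
      have hy2 : y ∈ C := by
        rw [hCeq]
        have hm2 : a ≤ m := le_max_right _ _
        exact ⟨by rw [hy]; linarith, by rw [hy]; linarith⟩
      have hVpre : IsPreconnected (Ioo (b - ε) (b + ε) ∪ C) :=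
        IsPreconnected.union y hy1 hy2 isPreconnected_Ioo hCc
      have hVsub : Ioo (b - ε) (b + ε) ∪ C ⊆ U := union_subset hIball hCU
      have hxV : x ∈ Ioo (b - ε) (b + ε) ∪ C := Or.inr (mem_connectedComponentIn hx)
      have := hVpre.subset_connectedComponentIn hxV hVsub
      have hbC : b ∈ C := this (Or.inl ⟨by linarith, by linarith⟩)
      rw [hCeq] at hbC
      exact lt_irrefl b hbC.2

/-- Integral of the derivative of a C¹ function over a bounded open set of ℝ,
when the function vanishes on the frontier, is zero. -/
lemma integral_deriv_zero {U : Set ℝ} (hU : IsOpen U) (hb : Bornology.IsBounded U)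
    {g : ℝ → ℝ} (hg : ContDiff ℝ 1 g) (h0 : ∀ x ∈ frontier U, g x = 0) :
    ∫ t in U, deriv g t = 0 := by
  classical
  set 𝒞 : Set (Set ℝ) := connectedComponentIn U '' U with h𝒞
  have hdisj : 𝒞.PairwiseDisjoint id := by
    rintro C ⟨x, hx, rfl⟩ D ⟨y, hy, rfl⟩ hne
    rw [Function.onFun, Set.disjoint_left]
    intro z hzC hzD
    exact hne ((connectedComponentIn_eq hzC).trans (connectedComponentIn_eq hzD).symm)
  have hopen : ∀ C ∈ 𝒞, IsOpen (id C) := by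
    rintro C ⟨x, hx, rfl⟩; exact hU.connectedComponentIn
  have hnonempty : ∀ C ∈ 𝒞, (id C).Nonempty := by
    rintro C ⟨x, hx, rfl⟩; exact ⟨x, mem_connectedComponentIn hx⟩
  have hcount : 𝒞.Countable := hdisj.countable_of_isOpen hopen hnonempty
  have := hcount.to_subtype
  have hUeq : U = ⋃ C : 𝒞, (C : Set ℝ) := by
    apply Subset.antisymm
    · intro x hx
      exact mem_iUnion.2 ⟨⟨_, ⟨x, hx, rfl⟩⟩, mem_connectedComponentIn hx⟩
    · refine iUnion_subset ?_
      rintro ⟨C, x, hx, rfl⟩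
      exact connectedComponentIn_subset U x
  have hinteg : IntegrableOn (deriv g) U := by
    have hK : IsCompact (closure U) := hb.isCompact_closure
    exact ((hg.continuous_deriv le_rfl).continuousOn.integrableOn_compact hK).mono_set
      subset_closure
  rw [hUeq] at hinteg ⊢
  have key := MeasureTheory.integral_iUnion (μ := volume)
    (s := fun C : ↥𝒞 => (C : Set ℝ)) (f := deriv g)
    (fun C => (hopen C C.2).measurableSet)
    (fun C D hne => hdisj C.2 D.2 (fun h => hne (Subtype.ext h))) hinteg
  rw [key]
  have hzero : ∀ C : 𝒞, ∫ t in (C : Set ℝ), deriv g t = 0 := by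
    rintro ⟨C, x, hx, rfl⟩
    obtain ⟨a, b, hab, hCeq, ha, hb'⟩ := comp_structure hU hb hx
    simp only [hCeq]
    rw [← MeasureTheory.integral_Ioc_eq_integral_Ioo,
      ← intervalIntegral.integral_of_le hab.le]
    rw [intervalIntegral.integral_deriv_eq_sub
      (fun x _ => (hg.differentiable one_ne_zero).differentiableAt)
      ((hg.continuous_deriv le_rfl).intervalIntegrable a b)]
    rw [h0 a ha, h0 b hb', sub_zero]
  simp [hzero]

lemma insertNth_eq_affine (i : Fin 3) (y : Fin 2 → ℝ) (t : ℝ) :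
    Fin.insertNth (α := fun _ : Fin 3 => ℝ) i t y
      = Fin.insertNth (α := fun _ : Fin 3 => ℝ) i 0 y + t • (Pi.single i 1 : V3) := by
  funext j
  refine Fin.succAboveCases i ?_ ?_ j
  · simp
  · intro k
    simp [Fin.insertNth_apply_succAbove, Pi.single_eq_of_ne (Fin.succAbove_ne i k)]

lemma integral_pd_zero {O : Set V3} (hO : IsOpen O) (hOb : Bornology.IsBounded O)
    {f : V3 → ℝ} (hf : ContDiff ℝ (⊤ : ℕ∞) f) (h0 : ∀ x ∈ frontier O, f x = 0) (i : Fin 3) :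
    ∫ x in O, pd f i x = 0 := by
  classical
  have hK : IsCompact (closure O) := hOb.isCompact_closure
  have hIntOn : IntegrableOn (pd f i) O :=
    ((pd_continuous hf i).continuousOn.integrableOn_compact hK).mono_set subset_closure
  set F : V3 → ℝ := O.indicator (pd f i) with hF
  have hFint : Integrable F := (integrable_indicator_iff hO.measurableSet).2 hIntOn
  rw [← integral_indicator hO.measurableSet]
  set e := MeasurableEquiv.piFinSuccAbove (fun _ : Fin 3 => ℝ) i with he
  have hmp : MeasurePreserving e.symm := (volume_preserving_piFinSuccAbove (fun _ : Fin 3 => ℝ) i).symm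
  have hcomp : ∫ p : ℝ × (Fin 2 → ℝ), F (e.symm p) = ∫ x : V3, F x :=
    hmp.integral_comp e.symm.measurableEmbedding F
  rw [← hcomp]
  have hFe : Integrable (fun p : ℝ × (Fin 2 → ℝ) => F (e.symm p)) :=
    (hmp.integrable_comp_emb e.symm.measurableEmbedding).2 hFint
  rw [MeasureTheory.Measure.volume_eq_prod] at hFe ⊢
  rw [MeasureTheory.integral_prod_symm _ hFe]
  have hinner : ∀ y : Fin 2 → ℝ, ∫ t : ℝ, F (e.symm (t, y)) = 0 := by
    intro y
    set φ : ℝ → V3 := fun t => i.insertNth t y with hφ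
    have hφ' : ∀ t, e.symm (t, y) = φ t := fun t => rfl
    have hφc : Continuous φ := by
      have : φ = fun t => Fin.insertNth (α := fun _ : Fin 3 => ℝ) i 0 y + t • (Pi.single i 1 : V3) := by
        funext t; exact insertNth_eq_affine i y t
      rw [this]; continuity
    have hφd : ∀ t : ℝ, HasDerivAt φ (Pi.single i 1) t := by
      intro t
      have : φ = fun t => Fin.insertNth (α := fun _ : Fin 3 => ℝ) i 0 y + t • (Pi.single i 1 : V3) := by
        funext t; exact insertNth_eq_affine i y t
      rw [this]
      simpa using ((hasDerivAt_id t).smul_const ((Pi.single i 1 : V3))).const_add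
        (Fin.insertNth (α := fun _ : Fin 3 => ℝ) i 0 y)
    set U : Set ℝ := φ ⁻¹' O with hU
    have hUo : IsOpen U := hO.preimage hφc
    have hUb : Bornology.IsBounded U := by
      obtain ⟨R, hR⟩ := hOb.subset_closedBall 0
      apply (Metric.isBounded_closedBall (x := (0:ℝ)) (r := R)).subset
      intro t ht
      have h1 : φ t ∈ Metric.closedBall 0 R := hR ht
      simp only [Metric.mem_closedBall, dist_zero_right] at h1 ⊢
      calc |t| = ‖φ t i‖ := by simp [hφ]
      _ ≤ ‖φ t‖ := norm_le_pi_norm (φ t) i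
      _ ≤ R := h1
    set g : ℝ → ℝ := fun t => f (φ t) with hg
    have hgc : ContDiff ℝ 1 g := by
      apply (hf.of_le (by simp)).comp
      have : φ = fun t => Fin.insertNth (α := fun _ : Fin 3 => ℝ) i 0 y + t • (Pi.single i 1 : V3) := by
        funext t; exact insertNth_eq_affine i y t
      rw [this]
      exact contDiff_const.add (contDiff_id.smul contDiff_const)
    have hgd : ∀ t, deriv g t = pd f i (φ t) := by
      intro t
      have : HasDerivAt g (fderiv ℝ f (φ t) (Pi.single i 1)) t :=
        ((hf.differentiable (by simp) (φ t)).hasFDerivAt).comp_hasDerivAt t (hφd t)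
      rw [this.deriv]; rfl
    have hfr : ∀ t ∈ frontier U, g t = 0 := by
      intro t ht
      apply h0
      have h1 : t ∈ closure U := ht.1
      have h2 : t ∉ U := by
        rw [frontier, hUo.interior_eq] at ht; exact ht.2
      have h3 : φ t ∈ closure O := by
        have := Continuous.closure_preimage_subset hφc O
        exact this h1
      rw [frontier, hO.interior_eq]
      exact ⟨h3, h2⟩
    calc ∫ t : ℝ, F (e.symm (t, y)) = ∫ t : ℝ, U.indicator (fun s => pd f i (φ s)) t := by
          apply integral_congr_ae; filter_upwards with t
          rw [hφ']
          simp only [hF, hU]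
          by_cases hmem : φ t ∈ O
          · rw [Set.indicator_of_mem hmem, Set.indicator_of_mem (show t ∈ φ ⁻¹' O from hmem)]
          · rw [Set.indicator_of_notMem hmem,
              Set.indicator_of_notMem (show t ∉ φ ⁻¹' O from hmem)]
      _ = ∫ t in U, pd f i (φ t) := integral_indicator hUo.measurableSet
      _ = ∫ t in U, deriv g t := by
          apply setIntegral_congr_ae hUo.measurableSet
          filter_upwards with t _
          rw [hgd t]
      _ = 0 := integral_deriv_zero hUo hUb hgc hfr
  rw [integral_congr_ae (Filter.Eventually.of_forall fun y => hinner y)]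
  simp

section Pointwise
variable {Q : V3 → M3} {u : V3 → V3} {cs : ℝ}

theorem key_pointwise (hQ : ∀ i j, ContDiff ℝ (⊤ : ℕ∞) (fun y => Q y i j))
    (hu : ∀ i, ContDiff ℝ (⊤ : ℕ∞) (fun y => u y i)) (x : V3) :
    - vdot (mdivg (odot Q) x) (u x)
      + (∑ k, ∑ l, vdot (u x) (gradv (fun y => Q y k l) x) * lap (fun y => Q y k l) x)
      - (∑ k, ∑ l, vdot (u x) (gradv (fun y => Q y k l) x)
          * (Q x k l + cs * Q x k l * mnormSq (Q x)))
    = (mGradSq Q x / 2 + mnormSq (Q x) / 2 + cs / 4 * (mnormSq (Q x)) ^ 2) * divv u x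
      - divv (fun y i =>
          (mGradSq Q y / 2 + mnormSq (Q y) / 2 + cs / 4 * (mnormSq (Q y)) ^ 2) * u y i) x := by
  -- differentiability facts
  have hQd : ∀ k l, DifferentiableAt ℝ (fun y => Q y k l) x :=
    fun k l => ((hQ k l).differentiable (by simp)).differentiableAt
  have hpdQ : ∀ k l i, ContDiff ℝ (⊤ : ℕ∞) (fun y => pd (fun z => Q z k l) i y) :=
    fun k l i => pd_contDiff (hQ k l) i
  have hpdQd : ∀ k l i, DifferentiableAt ℝ (fun y => pd (fun z => Q z k l) i y) x :=
    fun k l i => ((hpdQ k l i).differentiable (by simp)).differentiableAt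
  have hud : ∀ i, DifferentiableAt ℝ (fun y => u y i) x :=
    fun i => ((hu i).differentiable (by simp)).differentiableAt
  have hsum2 : ∀ (g : Fin 3 → Fin 3 → V3 → ℝ), (∀ a b, DifferentiableAt ℝ (g a b) x) →
      ∀ i, pd (fun y => ∑ a, ∑ b, g a b y) i x = ∑ a, ∑ b, pd (g a b) i x := by
    intro g hg i
    rw [pd_sum (fun a _ => DifferentiableAt.fun_sum (fun b _ => hg a b)) i]
    exact Finset.sum_congr rfl fun a _ => pd_sum (fun b _ => hg a b) i
  have hsum3 : ∀ (g : Fin 3 → Fin 3 → Fin 3 → V3 → ℝ),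
      (∀ a b c, DifferentiableAt ℝ (g a b c) x) →
      ∀ i, pd (fun y => ∑ a, ∑ b, ∑ c, g a b c y) i x = ∑ a, ∑ b, ∑ c, pd (g a b c) i x := by
    intro g hg i
    rw [pd_sum (fun a _ => DifferentiableAt.fun_sum fun b _ =>
      DifferentiableAt.fun_sum fun c _ => hg a b c) i]
    exact Finset.sum_congr rfl fun a _ => hsum2 (g a) (hg a) i
  -- derivative of |∇Q|²
  have h_pdGrad : ∀ i, pd (fun y => mGradSq Q y) i x
      = ∑ j, ∑ k, ∑ l, 2 * pd (fun z => Q z k l) j x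
          * pd (fun y => pd (fun z => Q z k l) j y) i x := by
    intro i
    simp only [mGradSq]
    rw [hsum3 (fun j k l => fun y => pd (fun z => Q z k l) j y ^ 2)
      (fun j k l => ((hpdQ k l j).pow 2).differentiable (by simp) |>.differentiableAt) i]
    exact Finset.sum_congr rfl fun j _ => Finset.sum_congr rfl fun k _ =>
      Finset.sum_congr rfl fun l _ => pd_sq (hpdQd k l j) i
  -- derivative of |Q|²
  have h_pdNorm : ∀ i, pd (fun y => mnormSq (Q y)) i x
      = ∑ k, ∑ l, 2 * Q x k l * pd (fun z => Q z k l) i x := by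
    intro i
    simp only [mnormSq]
    rw [hsum2 (fun k l => fun y => Q y k l ^ 2)
      (fun k l => (((hQ k l).pow 2).differentiable (by simp)).differentiableAt) i]
    exact Finset.sum_congr rfl fun k _ => Finset.sum_congr rfl fun l _ => pd_sq (hQd k l) i
  -- divergence of odot
  have h_odot : ∀ i j : Fin 3,
      pd (fun y => ∑ k, ∑ l, pd (fun z => Q z k l) i y * pd (fun z => Q z k l) j y) j x
      = ∑ k, ∑ l, (pd (fun y => pd (fun z => Q z k l) j y) i x * pd (fun z => Q z k l) j x
          + pd (fun z => Q z k l) i x * pd (fun y => pd (fun z => Q z k l) j y) j x) := by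
    intro i j
    rw [hsum2 (fun k l => fun y => pd (fun z => Q z k l) i y * pd (fun z => Q z k l) j y)
      (fun k l => (hpdQd k l i).mul (hpdQd k l j)) j]
    refine Finset.sum_congr rfl fun k _ => Finset.sum_congr rfl fun l _ => ?_
    rw [pd_mul (hpdQd k l i) (hpdQd k l j) j, pd_comm (hQ k l) i j]
  -- smoothness of the energy density
  have hGradC : ContDiff ℝ (⊤ : ℕ∞) (fun y => mGradSq Q y) := by
    simp only [mGradSq]
    exact ContDiff.sum fun j _ => ContDiff.sum fun k _ => ContDiff.sum fun l _ =>
      (hpdQ k l j).pow 2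
  have hNormC : ContDiff ℝ (⊤ : ℕ∞) (fun y => mnormSq (Q y)) := by
    simp only [mnormSq]
    exact ContDiff.sum fun k _ => ContDiff.sum fun l _ => (hQ k l).pow 2
  have hGd : DifferentiableAt ℝ (fun y => mGradSq Q y) x :=
    (hGradC.differentiable (by simp)).differentiableAt
  have hNd : DifferentiableAt ℝ (fun y => mnormSq (Q y)) x :=
    (hNormC.differentiable (by simp)).differentiableAt
  have hGd2 : DifferentiableAt ℝ (fun y => mGradSq Q y / 2) x := by fun_prop
  have hNd2 : DifferentiableAt ℝ (fun y => mnormSq (Q y) / 2) x := by fun_prop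
  have hFd1 : DifferentiableAt ℝ (fun y => mGradSq Q y / 2 + mnormSq (Q y) / 2) x := by fun_prop
  have hFd2 : DifferentiableAt ℝ (fun y => cs / 4 * mnormSq (Q y) ^ 2) x := by fun_prop
  have hFd : DifferentiableAt ℝ
      (fun y => mGradSq Q y / 2 + mnormSq (Q y) / 2 + cs / 4 * mnormSq (Q y) ^ 2) x := by
    fun_prop
  -- derivative of the energy density
  have h_pdF : ∀ i, pd (fun y => mGradSq Q y / 2 + mnormSq (Q y) / 2
        + cs / 4 * mnormSq (Q y) ^ 2) i x
      = pd (fun y => mGradSq Q y) i x / 2 + pd (fun y => mnormSq (Q y)) i x / 2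
        + cs / 4 * (2 * mnormSq (Q x) * pd (fun y => mnormSq (Q y)) i x) := by
    intro i
    rw [pd_add hFd1 hFd2 i,
      pd_add hGd2 hNd2 i,
      pd_div_const hGd 2 i, pd_div_const hNd 2 i,
      pd_const_mul (f := fun y => mnormSq (Q y) ^ 2) (hNd.pow 2) (cs / 4) i, pd_sq hNd i]
  -- divergence of F•u
  have h_divw : divv (fun y i =>
        (mGradSq Q y / 2 + mnormSq (Q y) / 2 + cs / 4 * mnormSq (Q y) ^ 2) * u y i) x
      = ∑ i, (pd (fun y => mGradSq Q y / 2 + mnormSq (Q y) / 2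
            + cs / 4 * mnormSq (Q y) ^ 2) i x * u x i
          + (mGradSq Q x / 2 + mnormSq (Q x) / 2 + cs / 4 * mnormSq (Q x) ^ 2)
            * pd (fun y => u y i) i x) := by
    simp only [divv]
    exact Finset.sum_congr rfl fun i _ => pd_mul hFd (hud i) i
  rw [h_divw]
  simp only [vdot, gradv, mdivg, odot, Matrix.of_apply, lap, divv]
  simp only [h_odot, h_pdF, h_pdGrad, h_pdNorm]
  simp only [Finset.sum_add_distrib, Finset.mul_sum, Finset.sum_mul, Fin.sum_univ_three]
  ring

end Pointwise

lemma integrableOn_of_continuous {O : Set V3} (hOb : Bornology.IsBounded O)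
    {f : V3 → ℝ} (hf : Continuous f) : IntegrableOn f O :=
  (hf.continuousOn.integrableOn_compact hOb.isCompact_closure).mono_set subset_closure

lemma integral_divv_zero {O : Set V3} (hO : IsOpen O) (hOb : Bornology.IsBounded O)
    {w : V3 → V3} (hw : ∀ i, ContDiff ℝ (⊤ : ℕ∞) (fun y => w y i))
    (h0 : ∀ x ∈ frontier O, ∀ i, w x i = 0) :
    ∫ x in O, divv w x = 0 := by
  have hz : ∀ i : Fin 3, ∫ x in O, pd (fun y => w y i) i x = 0 := fun i =>
    integral_pd_zero hO hOb (hw i) (fun x hx => h0 x hx i) i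
  simp only [divv]
  rw [MeasureTheory.integral_finset_sum _
    (fun i _ => integrableOn_of_continuous hOb (pd_continuous (hw i) i))]
  simp [hz]

lemma trace_sq_eq {A : M3} (hA : A.IsSymm) : (A * A).trace = mnormSq A := by
  simp only [Matrix.trace, Matrix.mul_apply, Matrix.diag, mnormSq, sq]
  exact Finset.sum_congr rfl fun i _ => Finset.sum_congr rfl fun j _ => by
    rw [hA.apply i j]

/-- the cancellation identities used to close the energy estimate.
(1) For a smooth symmetric traceless Q-tensor field with ∇Q·n = 0 on ∂O and a
smooth vector field u vanishing on ∂O: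
 −∫(∇·(∇Q⊙∇Q))·u + ∫ u^i∂_iQ^{kl}ΔQ^{kl} − ∫ u^i∂_iQ^{kl}(Q^{kl}+c*Q^{kl}|Q|²)
   = ∫ (½|∇Q|² + ½|Q|² + (c*/4) tr²(Q²)) div u.
(2) For any symmetric Q and skew-symmetric Ω:
   tr((ΩQ − QΩ)(Q + c* Q tr(Q²))) = 0. -/
theorem stmt_19
    (O : Set V3) (hO : IsOpen O) (hOb : Bornology.IsBounded O)
    (cs : ℝ)
    (nrm : V3 → V3) (hn : ∀ x ∈ frontier O, vnormSq (nrm x) = 1)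
    (Q : V3 → M3) (u : V3 → V3)
    (hQ : ∀ i j, ContDiff ℝ (⊤ : ℕ∞) (fun y => Q y i j))
    (hu : ∀ i, ContDiff ℝ (⊤ : ℕ∞) (fun y => u y i))
    (hQsym : ∀ x, Sym0 (Q x))
    (hQbc : ∀ x ∈ frontier O, ∀ i j, vdot (gradv (fun y => Q y i j) x) (nrm x) = 0)
    (hubc : ∀ x ∈ frontier O, ∀ i, u x i = 0) :
    (- (∫ x in O, vdot (mdivg (odot Q) x) (u x))
      + (∫ x in O, ∑ k, ∑ l,
          vdot (u x) (gradv (fun y => Q y k l) x) * lap (fun y => Q y k l) x)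
      - (∫ x in O, ∑ k, ∑ l,
          vdot (u x) (gradv (fun y => Q y k l) x)
            * (Q x k l + cs * Q x k l * mnormSq (Q x)))
      = ∫ x in O,
          (mGradSq Q x / 2 + mnormSq (Q x) / 2 + cs / 4 * ((Q x * Q x).trace) ^ 2)
            * divv u x)
    ∧ (∀ A W : M3, A.IsSymm → W.transpose = -W →
        ((W * A - A * W) * (A + (cs * (A * A).trace) • A)).trace = 0) := by
  constructor
  · -- part (1)
    have hQsymm : ∀ x : V3, (Q x).IsSymm := fun x => (hQsym x).1
    have hpdQ : ∀ k l i : Fin 3, ContDiff ℝ (⊤ : ℕ∞) (fun y => pd (fun z => Q z k l) i y) :=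
      fun k l i => pd_contDiff (hQ k l) i
    have codot : ∀ i j : Fin 3, ContDiff ℝ (⊤ : ℕ∞) (fun y => odot Q y i j) := by
      intro i j
      simp only [odot, Matrix.of_apply]
      exact ContDiff.sum fun k _ => ContDiff.sum fun l _ => (hpdQ k l i).mul (hpdQ k l j)
    have hGradC : ContDiff ℝ (⊤ : ℕ∞) (fun y => mGradSq Q y) := by
      simp only [mGradSq]
      exact ContDiff.sum fun j _ => ContDiff.sum fun k _ => ContDiff.sum fun l _ =>
        (hpdQ k l j).pow 2
    have hNormC : ContDiff ℝ (⊤ : ℕ∞) (fun y => mnormSq (Q y)) := by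
      simp only [mnormSq]
      exact ContDiff.sum fun k _ => ContDiff.sum fun l _ => (hQ k l).pow 2
    have hFC : ContDiff ℝ (⊤ : ℕ∞) (fun y => mGradSq Q y / 2 + mnormSq (Q y) / 2
        + cs / 4 * mnormSq (Q y) ^ 2) := by
      have h1 : ContDiff ℝ (⊤ : ℕ∞) (fun y => mGradSq Q y / 2) := hGradC.div_const 2
      have h2 : ContDiff ℝ (⊤ : ℕ∞) (fun y => mnormSq (Q y) / 2) := hNormC.div_const 2
      have h3 : ContDiff ℝ (⊤ : ℕ∞) (fun y => cs / 4 * mnormSq (Q y) ^ 2) :=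
        contDiff_const.mul (hNormC.pow 2)
      exact (h1.add h2).add h3
    have hwC : ∀ i : Fin 3, ContDiff ℝ (⊤ : ℕ∞) (fun y => (mGradSq Q y / 2 + mnormSq (Q y) / 2
        + cs / 4 * mnormSq (Q y) ^ 2) * u y i) := fun i => hFC.mul (hu i)
    have hwb : ∀ x ∈ frontier O, ∀ i : Fin 3, (mGradSq Q x / 2 + mnormSq (Q x) / 2
        + cs / 4 * mnormSq (Q x) ^ 2) * u x i = 0 := fun x hx i => by
      rw [hubc x hx i, mul_zero]
    -- continuity of the integrands
    have c1 : Continuous (fun x => vdot (mdivg (odot Q) x) (u x)) := by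
      simp only [vdot, mdivg]
      exact continuous_finset_sum _ fun i _ =>
        (continuous_finset_sum _ fun j _ => pd_continuous (codot i j) j).mul (hu i).continuous
    have c2 : Continuous (fun x => ∑ k, ∑ l,
        vdot (u x) (gradv (fun y => Q y k l) x) * lap (fun y => Q y k l) x) := by
      simp only [vdot, gradv, lap]
      exact continuous_finset_sum _ fun k _ => continuous_finset_sum _ fun l _ =>
        (continuous_finset_sum _ fun i _ =>
          (hu i).continuous.mul (pd_continuous (hQ k l) i)).mul
        (continuous_finset_sum _ fun i _ => pd_continuous (hpdQ k l i) i)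
    have c3 : Continuous (fun x => ∑ k, ∑ l,
        vdot (u x) (gradv (fun y => Q y k l) x)
          * (Q x k l + cs * Q x k l * mnormSq (Q x))) := by
      simp only [vdot, gradv, mnormSq]
      exact continuous_finset_sum _ fun k _ => continuous_finset_sum _ fun l _ =>
        (continuous_finset_sum _ fun i _ =>
          (hu i).continuous.mul (pd_continuous (hQ k l) i)).mul
        (((hQ k l).continuous).add ((continuous_const.mul (hQ k l).continuous).mul
          (continuous_finset_sum _ fun a _ => continuous_finset_sum _ fun b _ =>
            (hQ a b).continuous.pow 2)))
    have cdivu : Continuous (fun x => divv u x) := by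
      simp only [divv]
      exact continuous_finset_sum _ fun i _ => pd_continuous (hu i) i
    have c4 : Continuous (fun x => (mGradSq Q x / 2 + mnormSq (Q x) / 2
        + cs / 4 * mnormSq (Q x) ^ 2) * divv u x) := hFC.continuous.mul cdivu
    have c5 : Continuous (fun x => divv (fun y i => (mGradSq Q y / 2 + mnormSq (Q y) / 2
        + cs / 4 * mnormSq (Q y) ^ 2) * u y i) x) := by
      simp only [divv]
      exact continuous_finset_sum _ fun i _ => pd_continuous (hwC i) i
    -- integrability
    have hI1 := integrableOn_of_continuous hOb c1
    have hI2 := integrableOn_of_continuous hOb c2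
    have hI3 := integrableOn_of_continuous hOb c3
    have hI4 := integrableOn_of_continuous hOb c4
    have hI5 := integrableOn_of_continuous hOb c5
    have hI1n : IntegrableOn (fun x => - vdot (mdivg (odot Q) x) (u x)) O := hI1.neg
    have hI12 : IntegrableOn (fun x => - vdot (mdivg (odot Q) x) (u x)
        + ∑ k, ∑ l, vdot (u x) (gradv (fun y => Q y k l) x) * lap (fun y => Q y k l) x) O :=
      hI1n.add hI2
    calc
      - (∫ x in O, vdot (mdivg (odot Q) x) (u x))
          + (∫ x in O, ∑ k, ∑ l,
              vdot (u x) (gradv (fun y => Q y k l) x) * lap (fun y => Q y k l) x)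
          - (∫ x in O, ∑ k, ∑ l,
              vdot (u x) (gradv (fun y => Q y k l) x)
                * (Q x k l + cs * Q x k l * mnormSq (Q x)))
        = ∫ x in O, (- vdot (mdivg (odot Q) x) (u x)
            + (∑ k, ∑ l, vdot (u x) (gradv (fun y => Q y k l) x) * lap (fun y => Q y k l) x)
            - (∑ k, ∑ l, vdot (u x) (gradv (fun y => Q y k l) x)
                * (Q x k l + cs * Q x k l * mnormSq (Q x)))) := by
          rw [← MeasureTheory.integral_neg, ← MeasureTheory.integral_add hI1n hI2,
            ← MeasureTheory.integral_sub hI12 hI3]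
      _ = ∫ x in O, ((mGradSq Q x / 2 + mnormSq (Q x) / 2 + cs / 4 * mnormSq (Q x) ^ 2)
            * divv u x
          - divv (fun y i => (mGradSq Q y / 2 + mnormSq (Q y) / 2
              + cs / 4 * mnormSq (Q y) ^ 2) * u y i) x) :=
          integral_congr_ae (Filter.Eventually.of_forall fun x => key_pointwise hQ hu x)
      _ = (∫ x in O, (mGradSq Q x / 2 + mnormSq (Q x) / 2 + cs / 4 * mnormSq (Q x) ^ 2)
            * divv u x)
          - ∫ x in O, divv (fun y i => (mGradSq Q y / 2 + mnormSq (Q y) / 2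
              + cs / 4 * mnormSq (Q y) ^ 2) * u y i) x :=
          MeasureTheory.integral_sub hI4 hI5
      _ = ∫ x in O, (mGradSq Q x / 2 + mnormSq (Q x) / 2 + cs / 4 * mnormSq (Q x) ^ 2)
            * divv u x := by
          rw [integral_divv_zero hO hOb hwC hwb, sub_zero]
      _ = ∫ x in O,
            (mGradSq Q x / 2 + mnormSq (Q x) / 2 + cs / 4 * ((Q x * Q x).trace) ^ 2)
              * divv u x :=
          integral_congr_ae (Filter.Eventually.of_forall fun x => by
            simp only [trace_sq_eq (hQsymm x)])
  · -- part (2)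
    intro A W hA hW
    have h : ((W * A - A * W) * (A + (cs * (A * A).trace) • A)).trace
        = (1 + cs * (A * A).trace) * ((W * (A * A)).trace - (A * (W * A)).trace) := by
      simp [Matrix.sub_mul, Matrix.mul_add, Matrix.mul_smul, Matrix.trace_sub, Matrix.trace_add,
        Matrix.trace_smul, mul_assoc, smul_eq_mul]
      ring
    have h2 : (A * (W * A)).trace = (W * (A * A)).trace := by
      rw [← mul_assoc, Matrix.trace_mul_cycle, ← mul_assoc, Matrix.trace_mul_cycle]
    rw [h, h2]
    ring

end ALC
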